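/- For a digraph D of order n and integer k ≥ 2: (i) 0 ≤ λ_k(D) + λ_k(Dᶜ) ≤ n − 1, and the lower bound holds with equality if and only if λ(D) = λ(Dᶜ) = 0; (ii) 0 ≤ λ_k(D)·λ_k(Dᶜ) ≤ ((n−1)/2)², with the lower bound attained if and only if λ(D) = 0 or λ(Dᶜ) = 0. -/

import Mathlib

open Relation Set

variable {V : Type*}

/-- Reachability in a digraph using only arcs from the arc set `B`. -/
def ArcReach (B : Set (V × V)) : V → V → Prop :=
  Relation.ReflTransGen (fun x y => (x, y) ∈ B)

/-- A digraph, given by its arc set on vertex type `V`, is strongly connected. -/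
def IsStrong (A : Set (V × V)) : Prop :=
  ∀ u v : V, ArcReach A u v

/-- `(W, B)` is an `S`-strong subgraph of the digraph with arc set `A`:
a strongly connected subdigraph whose vertex set contains `S`. -/
def SStrongSub (A : Set (V × V)) (S W : Set V) (B : Set (V × V)) : Prop :=
  B ⊆ A ∧ S ⊆ W ∧ (∀ e ∈ B, e.1 ∈ W ∧ e.2 ∈ W) ∧
    ∀ u ∈ W, ∀ v ∈ W, ArcReach B u v

/-- `λ_S(D)`: the maximum number of pairwise arc-disjoint `S`-strong subgraphs. -/
noncomputable def lamS (A : Set (V × V)) (S : Set V) : ℕ :=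
  sSup {t | ∃ (W : Fin t → Set V) (B : Fin t → Set (V × V)),
    (∀ i, SStrongSub A S (W i) (B i)) ∧
    ∀ i j, i ≠ j → Disjoint (B i) (B j)}

/-- `κ_S(D)`: the maximum number of pairwise internally disjoint
(arc-disjoint, vertex sets meeting exactly in `S`) `S`-strong subgraphs. -/
noncomputable def kapS (A : Set (V × V)) (S : Set V) : ℕ :=
  sSup {t | ∃ (W : Fin t → Set V) (B : Fin t → Set (V × V)),
    (∀ i, SStrongSub A S (W i) (B i)) ∧
    (∀ i j, i ≠ j → Disjoint (B i) (B j)) ∧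
    ∀ i j, i ≠ j → W i ∩ W j = S}

/-- Strong subgraph `k`-arc-connectivity `λ_k(D)`. -/
noncomputable def lamK [Fintype V] (A : Set (V × V)) (k : ℕ) : ℕ :=
  sInf {m | ∃ S : Finset V, S.card = k ∧ m = lamS A ↑S}

/-- Strong subgraph `k`-connectivity `κ_k(D)`. -/
noncomputable def kapK [Fintype V] (A : Set (V × V)) (k : ℕ) : ℕ :=
  sInf {m | ∃ S : Finset V, S.card = k ∧ m = kapS A ↑S}

/-- An arc set is (the arc set of) a digraph: no loops. -/
def IsDigraph {V : Type*} (A : Set (V × V)) : Prop := ∀ e ∈ A, e.1 ≠ e.2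

/-- The complement digraph `Dᶜ`. -/
def complArcs {V : Type*} (A : Set (V × V)) : Set (V × V) :=
  {p | p.1 ≠ p.2 ∧ p ∉ A}

/-- The arc-strong connectivity `λ(D)`; `λ(D) = 0` iff `D` is not strong. -/
noncomputable def arcConn {V : Type*} [Fintype V] (A : Set (V × V)) : ℕ :=
  sInf {m | ∃ F : Finset (V × V), ↑F ⊆ A ∧ F.card = m ∧ ¬ IsStrong (A \ ↑F)}

/-!
Fix a `k`-set `S` and two distinct vertices `u, w ∈ S`. Each `S`-strong subgraph must leave `u`
to reach `w`, so arc-disjoint `S`-strong subgraphs of `D` use distinct out-arcs of `u`; hence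
`λ_k(D) ≤ d⁺_D(u)`, and likewise `λ_k(Dᶜ) ≤ d⁺_{Dᶜ}(u)`. The out-neighbourhoods of `u` in `D` and
`Dᶜ` partition `V \ {u}`, which gives `λ_k(D) + λ_k(Dᶜ) ≤ n - 1`, and the product bound is AM-GM.
For the equality cases, `λ_k(D) = 0` exactly when `D` is not strong: a strong `D` is itself an
`S`-strong subgraph for every `S`, while if `v` is unreachable from `u`, no subgraph is
`S`-strong for a `k`-set `S ⊇ {u, v}`. The same characterisation holds for `λ(D)`.
-/

namespace ArcReach

variable {B C : Set (V × V)} {u v : V}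

theorem mono (h : B ⊆ C) (hr : ArcReach B u v) : ArcReach C u v :=
  ReflTransGen.mono (r := fun x y => (x, y) ∈ B) (p := fun x y => (x, y) ∈ C)
    (fun _ _ hxy => h hxy) u v hr

theorem exists_out_arc (hr : ArcReach B u v) (huv : u ≠ v) : ∃ c, (u, c) ∈ B := by
  rcases ReflTransGen.cases_head hr with rfl | ⟨c, hc, -⟩
  · exact absurd rfl huv
  · exact ⟨c, hc⟩

end ArcReach

theorem not_isStrong_empty [Nontrivial V] : ¬ IsStrong (∅ : Set (V × V)) := by
  intro hs
  obtain ⟨u, v, huv⟩ := exists_pair_ne V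
  obtain ⟨c, hc⟩ := (hs u v).exists_out_arc huv
  exact hc

section LamS

variable {A : Set (V × V)} {S : Set V}

/-- `lamS A S` is by definition the supremum of this set. -/
def strongPackingSizes (A : Set (V × V)) (S : Set V) : Set ℕ :=
  {t | ∃ (W : Fin t → Set V) (B : Fin t → Set (V × V)),
    (∀ i, SStrongSub A S (W i) (B i)) ∧
    ∀ i j, i ≠ j → Disjoint (B i) (B j)}

theorem zero_mem_strongPackingSizes : 0 ∈ strongPackingSizes A S :=
  ⟨Fin.elim0, Fin.elim0, fun i => i.elim0, fun i => i.elim0⟩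

theorem le_ncard_out_of_mem_strongPackingSizes [Finite V] {u w : V} (hu : u ∈ S) (hw : w ∈ S)
    (huw : u ≠ w) {t : ℕ} (ht : t ∈ strongPackingSizes A S) : t ≤ {v | (u, v) ∈ A}.ncard := by
  obtain ⟨W, B, hsub, hdisj⟩ := ht
  have hout : ∀ i, ∃ c, (u, c) ∈ B i := fun i =>
    ((hsub i).2.2.2 u ((hsub i).2.1 hu) w ((hsub i).2.1 hw)).exists_out_arc huw
  choose f hf using hout
  have hf_inj : Function.Injective f := fun i j hij => by
    by_contra hne
    exact Set.disjoint_left.mp (hdisj i j hne) (hf i) (hij ▸ hf j)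
  simpa using Set.ncard_le_ncard_of_injOn (s := univ) (t := {v | (u, v) ∈ A}) f
    (fun i _ => (hsub i).1 (hf i)) hf_inj.injOn

theorem lamS_le_ncard_out [Finite V] {u w : V} (hu : u ∈ S) (hw : w ∈ S) (huw : u ≠ w) :
    lamS A S ≤ {v | (u, v) ∈ A}.ncard :=
  csSup_le ⟨0, zero_mem_strongPackingSizes⟩
    fun _ ht => le_ncard_out_of_mem_strongPackingSizes hu hw huw ht

theorem one_le_lamS [Finite V] {u w : V} (hu : u ∈ S) (hw : w ∈ S) (huw : u ≠ w)
    (hA : IsStrong A) : 1 ≤ lamS A S := by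
  refine le_csSup ⟨_, fun _ ht => le_ncard_out_of_mem_strongPackingSizes hu hw huw ht⟩ ?_
  refine ⟨fun _ => univ, fun _ => A, fun _ => ⟨subset_rfl, subset_univ S,
    fun _ _ => ⟨trivial, trivial⟩, fun a _ b _ => hA a b⟩, fun i j hij => ?_⟩
  exact absurd (Subsingleton.elim i j) hij

theorem lamS_eq_zero_of_not_arcReach {u v : V} (hu : u ∈ S) (hv : v ∈ S)
    (huv : ¬ ArcReach A u v) : lamS A S = 0 := by
  refine Nat.eq_zero_of_le_zero (csSup_le ⟨0, zero_mem_strongPackingSizes⟩ ?_)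
  rintro (_ | t) ⟨W, B, hsub, -⟩
  · exact le_rfl
  · obtain ⟨hBA, hSW, -, hstrong⟩ := hsub 0
    exact absurd ((hstrong u (hSW hu) v (hSW hv)).mono hBA) huv

end LamS

section LamK

variable [Fintype V] {A : Set (V × V)} {k : ℕ}

theorem lamK_le_lamS {S : Finset V} (hS : S.card = k) : lamK A k ≤ lamS A S :=
  Nat.sInf_le ⟨S, hS, rfl⟩

theorem lamK_le_ncard_out {S : Finset V} (hS : S.card = k) {u w : V} (hu : u ∈ S) (hw : w ∈ S)
    (huw : u ≠ w) : lamK A k ≤ {v | (u, v) ∈ A}.ncard :=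
  (lamK_le_lamS hS).trans (lamS_le_ncard_out (S := (S : Set V)) hu hw huw)

theorem one_le_lamK (h2 : 2 ≤ k) (hk : k ≤ Fintype.card V) (hA : IsStrong A) :
    1 ≤ lamK A k := by
  obtain ⟨S, -, hS⟩ := Finset.exists_subset_card_eq (s := Finset.univ) (by simpa using hk)
  refine le_csInf ⟨_, S, hS, rfl⟩ ?_
  rintro _ ⟨T, hT, rfl⟩
  obtain ⟨u, hu, w, hw, huw⟩ := Finset.one_lt_card.mp (show 1 < T.card by omega)
  exact one_le_lamS (S := (T : Set V)) hu hw huw hA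

theorem lamK_eq_zero_of_not_isStrong (h2 : 2 ≤ k) (hk : k ≤ Fintype.card V)
    (hA : ¬ IsStrong A) : lamK A k = 0 := by
  classical
  obtain ⟨u, v, huv⟩ : ∃ u v, ¬ ArcReach A u v := by simpa [IsStrong] using hA
  have hne : u ≠ v := fun e => huv (e ▸ ReflTransGen.refl)
  obtain ⟨S, hsub, hS⟩ := Finset.exists_superset_card_eq (s := {u, v})
    ((Finset.card_pair hne).trans_le h2) hk
  have h0 := lamS_eq_zero_of_not_arcReach (S := (S : Set V))
    (Finset.mem_coe.mpr (hsub (by simp))) (Finset.mem_coe.mpr (hsub (by simp))) huv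
  exact Nat.eq_zero_of_le_zero (h0 ▸ lamK_le_lamS hS)

theorem lamK_eq_zero_iff (h2 : 2 ≤ k) (hk : k ≤ Fintype.card V) :
    lamK A k = 0 ↔ ¬ IsStrong A :=
  ⟨fun h hA => by simpa [h] using one_le_lamK h2 hk hA, lamK_eq_zero_of_not_isStrong h2 hk⟩

end LamK

theorem arcConn_eq_zero_iff [Fintype V] [Nontrivial V] (A : Set (V × V)) :
    arcConn A = 0 ↔ ¬ IsStrong A := by
  classical
  constructor
  · intro h
    have hmem := Nat.sInf_mem
      (s := {m | ∃ F : Finset (V × V), ↑F ⊆ A ∧ F.card = m ∧ ¬ IsStrong (A \ ↑F)})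
      ⟨_, A.toFinset, by simp, rfl, by simpa using not_isStrong_empty⟩
    rw [show sInf _ = arcConn A from rfl, h] at hmem
    obtain ⟨F, -, hF, hns⟩ := hmem
    simpa [Finset.card_eq_zero.mp hF] using hns
  · intro h
    exact Nat.eq_zero_of_le_zero (Nat.sInf_le ⟨∅, by simp, rfl, by simpa using h⟩)

theorem ncard_out_add_ncard_out_complArcs [Finite V] {A : Set (V × V)}
    (hA : IsDigraph A) (u : V) :
    {v | (u, v) ∈ A}.ncard + {v | (u, v) ∈ complArcs A}.ncard = Nat.card V - 1 := by
  have hdisj : Disjoint {v | (u, v) ∈ A} {v | (u, v) ∈ complArcs A} :=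
    Set.disjoint_left.mpr fun _ h h' => h'.2 h
  have hunion : {v | (u, v) ∈ A} ∪ {v | (u, v) ∈ complArcs A} = {u}ᶜ := by
    ext v
    by_cases hv : (u, v) ∈ A
    · simpa [complArcs, hv] using (hA _ hv).symm
    · simp [complArcs, hv, eq_comm]
  rw [← Set.ncard_union_eq hdisj, hunion, Set.ncard_compl, Set.ncard_singleton]

theorem lamK_add_lamK_complArcs_le [Fintype V] {A : Set (V × V)} {k : ℕ}
    (hA : IsDigraph A) (h2 : 2 ≤ k) (hk : k ≤ Fintype.card V) :
    lamK A k + lamK (complArcs A) k ≤ Fintype.card V - 1 := by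
  obtain ⟨S, -, hS⟩ := Finset.exists_subset_card_eq (s := Finset.univ) (by simpa using hk)
  obtain ⟨u, hu, w, hw, huw⟩ := Finset.one_lt_card.mp (show 1 < S.card by omega)
  have hsum := ncard_out_add_ncard_out_complArcs hA u
  rw [Nat.card_eq_fintype_card] at hsum
  have := lamK_le_ncard_out (A := A) hS hu hw huw
  have := lamK_le_ncard_out (A := complArcs A) hS hu hw huw
  omega

theorem mul_le_half_sq_of_add_le {a b c : ℝ} (ha : 0 ≤ a) (hb : 0 ≤ b) (h : a + b ≤ c) :
    a * b ≤ (c / 2) ^ 2 := by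
  nlinarith [four_mul_le_sq_add a b]

/-- Nordhaus–Gaddum type bounds:
(i) `0 ≤ λ_k(D) + λ_k(Dᶜ) ≤ n − 1`, with the lower bound attained iff
`λ(D) = λ(Dᶜ) = 0`; (ii) `0 ≤ λ_k(D)·λ_k(Dᶜ) ≤ ((n−1)/2)²`, with the lower
bound attained iff `λ(D) = 0` or `λ(Dᶜ) = 0`. -/
theorem lamK_nordhaus_gaddum {V : Type*} [Fintype V] (A : Set (V × V))
    (n k : ℕ) (hA : IsDigraph A) (hn : Fintype.card V = n)
    (h2 : 2 ≤ k) (hk : k ≤ n) :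
    (lamK A k + lamK (complArcs A) k ≤ n - 1 ∧
      (lamK A k + lamK (complArcs A) k = 0 ↔
        arcConn A = 0 ∧ arcConn (complArcs A) = 0)) ∧
    ((lamK A k : ℝ) * (lamK (complArcs A) k : ℝ) ≤ (((n : ℝ) - 1) / 2) ^ 2 ∧
      (lamK A k * lamK (complArcs A) k = 0 ↔
        arcConn A = 0 ∨ arcConn (complArcs A) = 0)) := by
  subst hn
  have : Nontrivial V := Fintype.one_lt_card_iff_nontrivial.mp (by omega)
  have hsum := lamK_add_lamK_complArcs_le hA h2 hk
  have hzero : ∀ B : Set (V × V), lamK B k = 0 ↔ arcConn B = 0 := fun B => by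
    rw [lamK_eq_zero_iff h2 hk, arcConn_eq_zero_iff]
  have hsumR : (lamK A k : ℝ) + lamK (complArcs A) k ≤ (Fintype.card V : ℝ) - 1 := by
    rw [← Nat.cast_add, ← Nat.cast_pred (by omega)]
    exact_mod_cast hsum
  refine ⟨⟨hsum, ?_⟩, mul_le_half_sq_of_add_le (Nat.cast_nonneg _) (Nat.cast_nonneg _) hsumR, ?_⟩
  · rw [Nat.add_eq_zero_iff, hzero, hzero]
  · rw [Nat.mul_eq_zero, hzero, hzero]
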